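/- For an amenable embedding, Σ₀-Separation in the expanded language holds: if M ⊨ ZFC, j : M → M is elementary, and for every a ∈ M the restriction j ↾ a (as a set of pairs, computed externally) is an element of M, then for every Σ₀ formula φ(x, y⃗) of the language {∈, j} and every set a and parameters b⃗ in M, the class {x ∈ a : (M, j) ⊨ φ(x, b⃗)} is an element of M. -/
import Mathlib


open FirstOrder FirstOrder.Language

/-! ### The first-order language of set theory and the theory ZFC -/

/-- Relation symbols for the language of set theory: a single binary relation `∈`. -/
inductive memRel : ℕ → Type
  | mem : memRel 2

/-- The language of set theory `{∈}`. -/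
abbrev L : Language := ⟨fun _ => Empty, memRel⟩

instance (n : ℕ) : IsEmpty (L.Functions n) := ⟨fun f => f.elim⟩

/-- The membership atomic formula between two terms. -/
def mem' {α : Type} {n : ℕ} (t u : L.Term (α ⊕ Fin n)) : L.BoundedFormula α n :=
  Relations.boundedFormula₂ memRel.mem t u

/-- The semantic membership relation of an `L`-structure. -/
def E {M : Type} [L.Structure M] (x y : M) : Prop :=
  Structure.RelMap (L := L) (M := M) (n := 2) memRel.mem ![x, y]

/-- Extensionality. -/
def extAx : L.Sentence :=
  ∀' ∀' ((∀' (mem' &2 &0 ⇔ mem' &2 &1)) ⟹ &0 =' &1)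

/-- Pairing. -/
def pairAx : L.Sentence :=
  ∀' ∀' ∃' ∀' (mem' &3 &2 ⇔ (&3 =' &0 ⊔ &3 =' &1))

/-- Union. -/
def unionAx : L.Sentence :=
  ∀' ∃' ∀' (mem' &2 &1 ⇔ ∃' (mem' &3 &0 ⊓ mem' &2 &3))

/-- Power set. -/
def powerAx : L.Sentence :=
  ∀' ∃' ∀' (mem' &2 &1 ⇔ ∀' (mem' &3 &2 ⟹ mem' &3 &0))

/-- Infinity. -/
def infinityAx : L.Sentence :=
  ∃' ((∃' (mem' &1 &0 ⊓ ∀' ∼(mem' &2 &1))) ⊓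
    ∀' (mem' &1 &0 ⟹ ∃' (mem' &2 &0 ⊓ ∀' (mem' &3 &2 ⇔ (mem' &3 &1 ⊔ &3 =' &1)))))

/-- Foundation. -/
def foundationAx : L.Sentence :=
  ∀' ((∃' (mem' &1 &0)) ⟹ ∃' (mem' &1 &0 ⊓ ∀' (mem' &2 &0 ⟹ ∼(mem' &2 &1))))

/-- Choice: every family of nonempty pairwise disjoint sets has a selector. -/
def choiceAx : L.Sentence :=
  ∀' (((∀' (mem' &1 &0 ⟹ ∃' (mem' &2 &1))) ⊓
       (∀' ∀' ((mem' &1 &0 ⊓ mem' &2 &0 ⊓ ∃' (mem' &3 &1 ⊓ mem' &3 &2)) ⟹ &1 =' &2))) ⟹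
    ∃' ∀' (mem' &2 &0 ⟹
      ∃' (mem' &3 &2 ⊓ mem' &3 &1 ⊓ ∀' ((mem' &4 &2 ⊓ mem' &4 &1) ⟹ &4 =' &3))))

/-- The Separation axiom for the formula `φ(p₁,…,pₙ,x)` (with `x` the last variable):
`∀ p⃗ ∀ a ∃ b ∀ x (x ∈ b ↔ x ∈ a ∧ φ(p⃗, x))`. -/
def sepAx {n : ℕ} (φ : L.BoundedFormula Empty (n + 1)) : L.Sentence :=
  BoundedFormula.alls (α := Empty) (n := n)
    (∀' ∃' ∀' (mem' (&⟨n + 2, by omega⟩) (&⟨n + 1, by omega⟩) ⇔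
      (mem' (&⟨n + 2, by omega⟩) (&⟨n, by omega⟩) ⊓ φ.liftAt 2 n)))

/-- The Replacement axiom for the formula `φ(p₁,…,pₙ,x,y)`:
`∀ p⃗ ∀ a ((∀ x ∈ a ∃! y φ) → ∃ b ∀ x ∈ a ∃ y ∈ b φ)`. -/
def replAx {n : ℕ} (φ : L.BoundedFormula Empty (n + 2)) : L.Sentence :=
  BoundedFormula.alls (α := Empty) (n := n)
    (∀' ((∀' (mem' (&⟨n + 1, by omega⟩) (&⟨n, by omega⟩) ⟹
            ∃' ((φ.liftAt 1 n) ⊓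
              ∀' (((φ.liftAt 1 n).liftAt 1 (n + 2)) ⟹
                (&⟨n + 3, by omega⟩ =' &⟨n + 2, by omega⟩))))) ⟹
       ∃' ∀' (mem' (&⟨n + 2, by omega⟩) (&⟨n, by omega⟩) ⟹
          ∃' (mem' (&⟨n + 3, by omega⟩) (&⟨n + 1, by omega⟩) ⊓ φ.liftAt 2 n))))

/-- The theory ZF. -/
def ZF : L.Theory :=
  {extAx, pairAx, unionAx, powerAx, infinityAx, foundationAx} ∪
    {σ | ∃ (n : ℕ) (φ : L.BoundedFormula Empty (n + 1)), σ = sepAx φ} ∪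
    {σ | ∃ (n : ℕ) (φ : L.BoundedFormula Empty (n + 2)), σ = replAx φ}

/-- The theory ZFC. -/
def ZFC : L.Theory := ZF ∪ {choiceAx}

/-- A function between `L`-structures is (fully) elementary if it preserves the truth of all
first-order formulas (with all parameters). -/
def IsElem {M N : Type} [L.Structure M] [L.Structure N] (f : M → N) : Prop :=
  ∀ (n : ℕ) (φ : L.BoundedFormula Empty n) (v : Fin n → M),
    φ.Realize Empty.elim v ↔ φ.Realize Empty.elim (f ∘ v)

/-- `x` is an ordinal of the model: transitive and linearly ordered by `∈`. -/
def IsOrd {M : Type} [L.Structure M] (x : M) : Prop :=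
  (∀ y, E y x → ∀ z, E z y → E z x) ∧
  (∀ y z, E y x → E z x → (E y z ∨ y = z ∨ E z y))

/-- `x` is a limit ordinal of the model. -/
def IsLimitOrd {M : Type} [L.Structure M] (x : M) : Prop :=
  IsOrd x ∧ (∃ y, E y x) ∧ ∀ y, E y x → ∃ z, E z x ∧ E y z

/-- `p` is the Kuratowski ordered pair of `a` and `b` in the model. -/
def IsPair {M : Type} [L.Structure M] (p a b : M) : Prop :=
  ∃ s d : M, (∀ x, E x p ↔ (x = s ∨ x = d)) ∧
    (∀ x, E x s ↔ x = a) ∧ (∀ x, E x d ↔ (x = a ∨ x = b))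

/-- `x` is the `n`-th von Neumann natural number of the model. -/
def VNum {M : Type} [L.Structure M] : ℕ → M → Prop
  | 0, x => ∀ y, ¬ E y x
  | n + 1, x => ∃ z, VNum n z ∧ ∀ y, E y x ↔ (E y z ∨ y = z)

/-- The embedding `j` is amenable: `j ↾ a` (as a set of Kuratowski pairs) is an element of the
model, for every `a` in the model. -/
def Amenable {M : Type} [L.Structure M] (j : M → M) : Prop :=
  ∀ a : M, ∃ r : M, ∀ p : M, E p r ↔ ∃ x : M, E x a ∧ IsPair p x (j x)

/-- The induced structure on a subclass of an `L`-structure. -/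
def subStruct {M : Type} [L.Structure M] (P : M → Prop) : L.Structure {x : M // P x} where
  funMap f _ := f.elim
  RelMap r v := Structure.RelMap (M := M) r fun i => (v i).val

/-- Δ₀ formulas over a language `L'` with a designated membership relation `r`:
generated from atomic formulas by connectives and membership-bounded quantifiers. -/
inductive IsDelta0 (L' : Language) (r : L'.Relations 2) :
    {n : ℕ} → L'.BoundedFormula Empty n → Prop
  | falsum {n : ℕ} : IsDelta0 L' r (n := n) ⊥
  | equal {n : ℕ} (t u : L'.Term (Empty ⊕ Fin n)) : IsDelta0 L' r (t.bdEqual u)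
  | rel {n k : ℕ} (R : L'.Relations k) (ts : Fin k → L'.Term (Empty ⊕ Fin n)) :
      IsDelta0 L' r (R.boundedFormula ts)
  | imp {n : ℕ} {φ ψ : L'.BoundedFormula Empty n} :
      IsDelta0 L' r φ → IsDelta0 L' r ψ → IsDelta0 L' r (φ.imp ψ)
  | ball {n : ℕ} (t : L'.Term (Empty ⊕ Fin n)) {φ : L'.BoundedFormula Empty (n + 1)} :
      IsDelta0 L' r φ →
      IsDelta0 L' r
        (∀' ((Relations.boundedFormula₂ r (&⟨n, by omega⟩)
            (t.relabel (Sum.map id Fin.castSucc))) ⟹ φ))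

/-- Σ₁ formulas: Δ₀ formulas, or a single existential quantifier over a Δ₀ formula. -/
def IsSigma1 (L' : Language) (r : L'.Relations 2) {n : ℕ}
    (φ : L'.BoundedFormula Empty n) : Prop :=
  IsDelta0 L' r φ ∨ ∃ ψ : L'.BoundedFormula Empty (n + 1), IsDelta0 L' r ψ ∧ φ = ∃' ψ

/-- Function symbols for the language `{∈, j}`: a single unary function symbol `j`. -/
inductive jFun : ℕ → Type
  | j : jFun 1

/-- The language `{∈, j}`. -/
abbrev Lj : Language := ⟨jFun, memRel⟩

/-- The `{∈, j}`-structure on `M` induced by its membership relation together with a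
map `j : M → M` interpreting the symbol `j`. -/
def jStruct (M : Type) [L.Structure M] (j : M → M) : Lj.Structure M where
  funMap {n} f v := match n, f with
    | 1, jFun.j => j (v 0)
  RelMap r v := Structure.RelMap (L := L) (M := M) r v

section Axioms
variable {M : Type} [L.Structure M]

@[simp] lemma realize_mem' {α : Type} {n : ℕ} (t u : L.Term (α ⊕ Fin n)) (v : α → M)
    (xs : Fin n → M) :
    (mem' t u).Realize v xs ↔ E (t.realize (Sum.elim v xs)) (u.realize (Sum.elim v xs)) := by
  simp [mem', E, BoundedFormula.realize_rel₂]

lemma hpair (hM : M ⊨ ZFC) : ∀ x y : M, ∃ p, ∀ z, E z p ↔ (z = x ∨ z = y) := by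
  have h := hM.realize_of_mem pairAx (by left; left; left; simp [ZF])
  rw [Sentence.Realize, pairAx] at h
  intro x y
  simp only [Formula.Realize, BoundedFormula.realize_all, BoundedFormula.realize_ex,
    BoundedFormula.realize_iff, BoundedFormula.realize_sup, BoundedFormula.realize_bdEqual,
    realize_mem', Term.realize_var, Sum.elim_inr] at h
  obtain ⟨p, hp⟩ := h x y
  refine ⟨p, fun z => ?_⟩
  have := hp z
  simpa [Fin.snoc] using this

end Axioms

section
variable {M : Type} [L.Structure M]

lemma hunion (hM : M ⊨ ZFC) : ∀ x : M, ∃ u, ∀ z, E z u ↔ ∃ w, E w x ∧ E z w := by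
  have h := hM.realize_of_mem unionAx (by left; left; left; simp [ZF])
  rw [Sentence.Realize, unionAx] at h
  intro x
  simp only [Formula.Realize, BoundedFormula.realize_all, BoundedFormula.realize_ex,
    BoundedFormula.realize_iff, BoundedFormula.realize_inf, realize_mem', Term.realize_var,
    Function.comp_apply, Sum.elim_inr] at h
  obtain ⟨u, hu⟩ := h x
  refine ⟨u, fun z => ?_⟩
  simpa [Fin.snoc] using hu z

end

section
variable {M : Type} [L.Structure M]

lemma hsepL (hM : M ⊨ ZFC) {n : ℕ} (φ : L.BoundedFormula Empty (n+1)) (v : Fin n → M) (a : M) :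
    ∃ b : M, ∀ x, E x b ↔ E x a ∧ φ.Realize Empty.elim (Fin.snoc v x) := by
  have h := hM.realize_of_mem (sepAx φ) (by left; left; right; exact ⟨n, φ, rfl⟩)
  rw [Sentence.Realize, sepAx] at h
  rw [show (default : Empty → M) = Empty.elim from funext fun e => e.elim] at h
  rw [BoundedFormula.realize_alls] at h
  have h2 := h v
  simp only [BoundedFormula.realize_all, BoundedFormula.realize_ex,
    BoundedFormula.realize_iff, BoundedFormula.realize_inf, realize_mem', Term.realize_var,
    Function.comp_apply, Sum.elim_inr] at h2
  obtain ⟨b, hb⟩ := h2 a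
  refine ⟨b, fun x => ?_⟩
  have h3 := hb x
  rw [BoundedFormula.realize_liftAt (by omega)] at h3
  have hxs : (Fin.snoc (Fin.snoc (Fin.snoc v a) b) x ∘
      fun i : Fin (n+1) => if (i : ℕ) < n then Fin.castAdd 2 i else Fin.addNat i 2)
      = Fin.snoc v x := by
    funext i
    by_cases hi : (i : ℕ) < n
    · have h1 : (i : ℕ) < n + 1 := by omega
      have h2 : (i : ℕ) < n + 2 := by omega
      simp only [Function.comp_apply, if_pos hi]
      simp [Fin.snoc, hi, h1, h2]
      congr 1
    · have he : (i : ℕ) = n := by omega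
      simp only [Function.comp_apply, if_neg hi]
      simp [Fin.snoc, he, hi]
  rw [hxs] at h3
  have e1 : (Fin.snoc (Fin.snoc (Fin.snoc v a) b) x : Fin (n+3) → M) ⟨n+2, by omega⟩ = x := by
    simp [Fin.snoc]
  have e2 : (Fin.snoc (Fin.snoc (Fin.snoc v a) b) x : Fin (n+3) → M) ⟨n+1, by omega⟩ = b := by
    simp [Fin.snoc]
  have e3 : (Fin.snoc (Fin.snoc (Fin.snoc v a) b) x : Fin (n+3) → M) ⟨n, by omega⟩ = a := by
    simp [Fin.snoc]
  rw [e1, e2, e3] at h3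
  exact h3

end

/-- Formula asserting that variable `ip` is the Kuratowski pair of `ia` and `ib`. -/
def pairF {k : ℕ} (ip ia ib : Fin k) : L.BoundedFormula Empty k :=
  ∃' ∃' (
    (∀' (mem' &(Fin.last (k+2)) &(ip.castSucc.castSucc.castSucc) ⇔
      (&(Fin.last (k+2)) =' &((Fin.last k).castSucc.castSucc) ⊔
       &(Fin.last (k+2)) =' &((Fin.last (k+1)).castSucc)))) ⊓
    ((∀' (mem' &(Fin.last (k+2)) &((Fin.last k).castSucc.castSucc) ⇔
       &(Fin.last (k+2)) =' &(ia.castSucc.castSucc.castSucc))) ⊓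
     (∀' (mem' &(Fin.last (k+2)) &((Fin.last (k+1)).castSucc) ⇔
       (&(Fin.last (k+2)) =' &(ia.castSucc.castSucc.castSucc) ⊔
        &(Fin.last (k+2)) =' &(ib.castSucc.castSucc.castSucc))))))

section Sem
variable {M : Type} [L.Structure M]

lemma realize_pairF {k : ℕ} (ip ia ib : Fin k) (w : Fin k → M) :
    (pairF ip ia ib).Realize Empty.elim w ↔ IsPair (w ip) (w ia) (w ib) := by
  simp only [pairF, IsPair, BoundedFormula.realize_ex, BoundedFormula.realize_inf,
    BoundedFormula.realize_all, BoundedFormula.realize_iff, BoundedFormula.realize_sup,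
    BoundedFormula.realize_bdEqual, realize_mem', Term.realize_var, Function.comp_apply,
    Sum.elim_inr, Fin.snoc_last, Fin.snoc_castSucc]

lemma pair_unique {p a b a' b' : M}
    (h : IsPair p a b) (h' : IsPair p a' b') : a = a' ∧ b = b' := by
  obtain ⟨s, d, hp, hs, hd⟩ := h
  obtain ⟨s', d', hp', hs', hd'⟩ := h'
  have hsp : E s p := (hp s).2 (Or.inl rfl)
  have hdp : E d p := (hp d).2 (Or.inr rfl)
  have hs'p : E s' p := (hp' s').2 (Or.inl rfl)
  have hd'p : E d' p := (hp' d').2 (Or.inr rfl)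
  have has : E a s := (hs a).2 rfl
  have hbd : E b d := (hd b).2 (Or.inr rfl)
  have ha's' : E a' s' := (hs' a').2 rfl
  have ha'd' : E a' d' := (hd' a').2 (Or.inl rfl)
  have hb'd' : E b' d' := (hd' b').2 (Or.inr rfl)
  rcases (hp' s).1 hsp with hA | hB
  · -- s = s'
    have haa' : a = a' := (hs' a).1 (by rw [hA] at has; exact has)
    refine ⟨haa', ?_⟩
    rcases (hp' d).1 hdp with h1 | h1
    · -- d = s'
      have hb : b = a' := (hs' b).1 (by rw [h1] at hbd; exact hbd)
      rcases (hp d').1 hd'p with h2 | h2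
      · have hb' : b' = a := (hs b').1 (by rw [h2] at hb'd'; exact hb'd')
        exact hb.trans (haa'.symm.trans hb'.symm)
      · have hb' : b' = a' ∨ b' = b := by
          rw [h2, h1] at hb'd'; rcases (hs' b').1 hb'd' with h3; exact Or.inl h3
        rcases hb' with h3 | h3
        · exact hb.trans h3.symm
        · exact h3.symm
    · -- d = d'
      rw [h1] at hbd
      rcases (hd' b).1 hbd with h3 | h3
      · rw [← h1] at hb'd'
        rcases (hd b').1 hb'd' with h4 | h4
        · exact h3.trans (haa'.symm.trans h4.symm)
        · exact h4.symm
      · exact h3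
  · -- s = d'
    have ha'a : a' = a := (hs a').1 (by rw [← hB] at ha'd'; exact ha'd')
    have hb'a : b' = a := (hs b').1 (by rw [← hB] at hb'd'; exact hb'd')
    refine ⟨ha'a.symm, ?_⟩
    rcases (hp s').1 hs'p with h1 | h1
    · rcases (hp' d).1 hdp with h2 | h2
      · have hb : b = a := (hs b).1 (by rw [h2, h1] at hbd; exact hbd)
        exact hb.trans hb'a.symm
      · have hb : b = a := (hs b).1 (by rw [h2, ← hB] at hbd; exact hbd)
        exact hb.trans hb'a.symm
    · have hb : b = a' := (hs' b).1 (by rw [← h1] at hbd; exact hbd)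
      exact hb.trans (ha'a.trans hb'a.symm)

end Sem

section Sem2
variable {M : Type} [L.Structure M] {j : M → M}

lemma exists_pair (hM : M ⊨ ZFC) (a b : M) : ∃ p : M, IsPair p a b := by
  obtain ⟨s, hs⟩ := hpair hM a a
  obtain ⟨d, hd⟩ := hpair hM a b
  obtain ⟨p, hp⟩ := hpair hM s d
  exact ⟨p, s, d, hp, fun x => by rw [hs]; tauto, hd⟩

lemma binUnion (hM : M ⊨ ZFC) (a b : M) : ∃ u : M, ∀ z, E z u ↔ (E z a ∨ E z b) := by
  obtain ⟨q, hq⟩ := hpair hM a b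
  obtain ⟨u, hu⟩ := hunion hM q
  refine ⟨u, fun z => ?_⟩
  rw [hu]
  constructor
  · rintro ⟨w, hw, hzw⟩
    rcases (hq w).1 hw with rfl | rfl
    · exact Or.inl hzw
    · exact Or.inr hzw
  · rintro (h | h)
    · exact ⟨a, (hq a).2 (Or.inl rfl), h⟩
    · exact ⟨b, (hq b).2 (Or.inr rfl), h⟩

/-- The image of a set under `j` is a set, by amenability. -/
lemma jImage (hM : M ⊨ ZFC) (hamen : Amenable j) (c : M) :
    ∃ ic : M, ∀ y, E y ic ↔ ∃ x, E x c ∧ y = j x := by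
  obtain ⟨r, hr⟩ := hamen c
  obtain ⟨u1, hu1⟩ := hunion hM r
  obtain ⟨u2, hu2⟩ := hunion hM u1
  obtain ⟨b, hb⟩ := hsepL hM
    (∃' (mem' &2 &0 ⊓ ∃' (pairF (⟨2, by omega⟩ : Fin 4) ⟨3, by omega⟩ ⟨1, by omega⟩)))
    (fun _ => r : Fin 1 → M) u2
  refine ⟨b, fun y => ?_⟩
  rw [hb y]
  have hre : (∃' (mem' (&2 : L.Term (Empty ⊕ Fin 3)) &0 ⊓
      ∃' (pairF (⟨2, by omega⟩ : Fin 4) ⟨3, by omega⟩ ⟨1, by omega⟩))).Realize Empty.elim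
        (Fin.snoc (fun _ => r : Fin 1 → M) y) ↔ ∃ p : M, E p r ∧ ∃ x : M, IsPair p x y := by
    simp only [BoundedFormula.realize_ex, BoundedFormula.realize_inf, realize_mem',
      Term.realize_var, Function.comp_apply, Sum.elim_inr, realize_pairF]
    constructor
    · rintro ⟨p, h1, x, h2⟩
      refine ⟨p, ?_, x, ?_⟩
      · simpa [Fin.snoc] using h1
      · simpa [Fin.snoc] using h2
    · rintro ⟨p, h1, x, h2⟩
      refine ⟨p, ?_, x, ?_⟩
      · simpa [Fin.snoc] using h1
      · simpa [Fin.snoc] using h2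
  rw [hre]
  constructor
  · rintro ⟨_, p, hpr, x, hpxy⟩
    obtain ⟨x', hx'c, hx'⟩ := (hr p).1 hpr
    obtain ⟨hxx, hyy⟩ := pair_unique hpxy hx'
    exact ⟨x', hx'c, hyy⟩
  · rintro ⟨x, hxc, rfl⟩
    obtain ⟨p, hpair'⟩ := exists_pair hM x (j x)
    have hpr : E p r := (hr p).2 ⟨x, hxc, hpair'⟩
    refine ⟨?_, p, hpr, x, hpair'⟩
    -- j x ∈ u2 : j x ∈ d ∈ p ∈ r
    obtain ⟨s, d, hp, hs, hd⟩ := hpair'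
    have h1 : E d p := (hp d).2 (Or.inr rfl)
    have h2 : E (j x) d := (hd (j x)).2 (Or.inr rfl)
    exact (hu2 (j x)).2 ⟨d, (hu1 d).2 ⟨p, hpr, h1⟩, h2⟩

/-- A chain of sets, each transitive-and-`j`-closed into the next. -/
def ChainOK (j : M → M) (c : ℕ → M) : Prop :=
  ∀ k, (∀ z, E z (c k) → E z (c (k+1))) ∧
    (∀ z w, E z (c k) → E w z → E w (c (k+1))) ∧
    (∀ z, E z (c k) → E (j z) (c (k+1)))

lemma exists_next (hM : M ⊨ ZFC) (hamen : Amenable j) (x : M) :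
    ∃ y : M, (∀ z, E z x → E z y) ∧ (∀ z w, E z x → E w z → E w y) ∧
      (∀ z, E z x → E (j z) y) := by
  obtain ⟨u, hu⟩ := hunion hM x
  obtain ⟨im, him⟩ := jImage hM hamen x
  obtain ⟨w1, hw1⟩ := binUnion hM u im
  obtain ⟨y, hy⟩ := binUnion hM x w1
  refine ⟨y, fun z hz => (hy z).2 (Or.inl hz), ?_, ?_⟩
  · intro z w hz hw
    exact (hy w).2 (Or.inr ((hw1 w).2 (Or.inl ((hu w).2 ⟨z, hz, hw⟩))))
  · intro z hz
    exact (hy (j z)).2 (Or.inr ((hw1 (j z)).2 (Or.inr ((him (j z)).2 ⟨z, hz, rfl⟩))))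

lemma exists_chain (hM : M ⊨ ZFC) (hamen : Amenable j) (c0 : M) :
    ∃ c : ℕ → M, c 0 = c0 ∧ ChainOK j c := by
  refine ⟨fun k => Nat.rec c0 (fun _ p => Classical.choose (exists_next hM hamen p)) k, rfl, ?_⟩
  intro k
  exact Classical.choose_spec (exists_next hM hamen
    (Nat.rec c0 (fun _ p => Classical.choose (exists_next hM hamen p)) k))

lemma chain_mono {c : ℕ → M} (hc : ChainOK j c) {k k' : ℕ} (h : k ≤ k') :
    ∀ z, E z (c k) → E z (c k') := by
  induction h with
  | refl => exact fun z hz => hz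
  | step h ih => exact fun z hz => (hc _).1 z (ih z hz)

lemma exists_c0 (hM : M ⊨ ZFC) : ∀ (n : ℕ) (v : Fin n → M) (a : M),
    ∃ c : M, (∀ z, E z a → E z c) ∧ (∀ i, E (v i) c) := by
  intro n
  induction n with
  | zero => exact fun v a => ⟨a, fun z hz => hz, fun i => i.elim0⟩
  | succ m ih =>
    intro v a
    obtain ⟨c', hc1, hc2⟩ := ih (v ∘ Fin.castSucc) a
    obtain ⟨s, hs⟩ := hpair hM (v (Fin.last m)) (v (Fin.last m))
    obtain ⟨c, hc⟩ := binUnion hM c' s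
    refine ⟨c, fun z hz => (hc z).2 (Or.inl (hc1 z hz)), fun i => ?_⟩
    induction i using Fin.lastCases with
    | last => exact (hc _).2 (Or.inr ((hs _).2 (Or.inl rfl)))
    | cast i' => exact (hc _).2 (Or.inl (hc2 i'))

/-- `r` codes the restriction of `j` to `cD`. -/
def Codes (j : M → M) (r cD : M) : Prop :=
  ∀ p, E p r ↔ ∃ x, E x cD ∧ IsPair p x (j x)

end Sem2

/-- Auxiliary formula: in context `m+3` (with `r` at `0`, result `y` at `m+1`, argument `z` at
`m+2`), asserts `∃ p ∈ r, IsPair p z y`. -/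
def jpairF (m : ℕ) : L.BoundedFormula Empty (m+3) :=
  ∃' ((mem' &(Fin.last (m+3)) &((0 : Fin (m+1)).castSucc.castSucc.castSucc)) ⊓
    pairF (Fin.last (m+3)) ((Fin.last (m+2)).castSucc) ((Fin.last (m+1)).castSucc.castSucc))

/-- Depth of `j`-nesting in a term. -/
def tdepth {m : ℕ} : Lj.Term (Empty ⊕ Fin m) → ℕ
  | Term.var _ => 0
  | Term.func jFun.j ts => tdepth (ts 0) + 1

/-- The `L`-formula expressing, in context `m+2` (with `r` at index `0`, the original
variables at `1,…,m`, and a result variable at `m+1`), that the result variable equals the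
value of the `{∈,j}`-term `t`, where applications of `j` are computed via the relation `r`. -/
def valF {m : ℕ} : Lj.Term (Empty ⊕ Fin m) → L.BoundedFormula Empty (m + 2)
  | Term.var (Sum.inl e) => e.elim
  | Term.var (Sum.inr i) =>
      (&(i.succ.castSucc) : L.Term (Empty ⊕ Fin (m+2))) =' &(Fin.last (m+1))
  | Term.func jFun.j ts => ∃' (((valF (ts 0)).liftAt 1 (m+1)) ⊓ jpairF m)

section Terms
variable {M : Type} [L.Structure M] {j : M → M}

lemma realize_jpairF {m : ℕ} (u : Fin (m+3) → M) :
    (jpairF m).Realize Empty.elim u ↔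
      ∃ p, E p (u ((0 : Fin (m+1)).castSucc.castSucc)) ∧
        IsPair p (u (Fin.last (m+2))) (u ((Fin.last (m+1)).castSucc)) := by
  simp only [jpairF, BoundedFormula.realize_ex, BoundedFormula.realize_inf, realize_mem',
    Term.realize_var, Function.comp_apply, Sum.elim_inr, realize_pairF,
    Fin.snoc_last, Fin.snoc_castSucc]

lemma snoc_comp_lift {m : ℕ} (w : Fin (m+1) → M) (y z : M) :
    ((Fin.snoc (Fin.snoc w y) z : Fin (m+3) → M) ∘
      fun i : Fin (m+2) => if (i : ℕ) < m+1 then Fin.castAdd 1 i else Fin.addNat i 1)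
      = Fin.snoc w z := by
  funext i
  by_cases hi : (i : ℕ) < m+1
  · have h1 : (i : ℕ) < m + 2 := by omega
    simp only [Function.comp_apply, if_pos hi]
    simp [Fin.snoc, hi, h1]
  · have he : (i : ℕ) = m + 1 := by omega
    simp only [Function.comp_apply, if_neg hi]
    simp [Fin.snoc, he, hi]

lemma snoc_comp_top {k : ℕ} (u : Fin k → M) (y : M) :
    ((Fin.snoc u y : Fin (k+1) → M) ∘
      fun i : Fin k => if (i : ℕ) < k then Fin.castAdd 1 i else Fin.addNat i 1)
      = u := by
  funext i
  simp only [Function.comp_apply, if_pos i.isLt]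
  simp [Fin.snoc, i.isLt]

lemma cons_snoc {n : ℕ} (r x : M) (v : Fin n → M) :
    (Fin.cons r (Fin.snoc v x) : Fin (n+2) → M) = Fin.snoc (Fin.cons r v) x := by
  funext i
  induction i using Fin.lastCases with
  | last =>
    rw [Fin.snoc_last, ← Fin.succ_last, Fin.cons_succ, Fin.snoc_last]
  | cast i =>
    rw [Fin.snoc_castSucc]
    induction i using Fin.cases with
    | zero => rw [Fin.castSucc_zero, Fin.cons_zero, Fin.cons_zero]
    | succ i' =>
      rw [← Fin.succ_castSucc, Fin.cons_succ, Fin.cons_succ, Fin.snoc_castSucc]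

lemma snoc_zero' {k : ℕ} (u : Fin (k+1) → M) (x : M) :
    (Fin.snoc u x : Fin (k+2) → M) 0 = u 0 := by
  have h : (0 : Fin (k+2)) = Fin.castSucc 0 := rfl
  rw [h, Fin.snoc_castSucc]

lemma term_ok (hM : M ⊨ ZFC) {m : ℕ} (t : Lj.Term (Empty ⊕ Fin m))
    (c : ℕ → M) (hc : ChainOK j c) (D k : ℕ) (hD : k + tdepth t ≤ D)
    (r : M) (hr : Codes j r (c D)) (v : Fin m → M) (hv : ∀ i, E (v i) (c k)) :
    E (@Term.realize Lj M (jStruct M j) _ (Sum.elim Empty.elim v) t) (c (k + tdepth t)) ∧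
    ∀ y : M, ((valF t).Realize Empty.elim (Fin.snoc (Fin.cons r v) y) ↔
      y = @Term.realize Lj M (jStruct M j) _ (Sum.elim Empty.elim v) t) := by
  induction t with
  | var s =>
    rcases s with e | i
    · exact e.elim
    · constructor
      · simpa [tdepth] using hv i
      · intro y
        simp only [valF, BoundedFormula.realize_bdEqual, Term.realize_var, Function.comp_apply, Sum.elim_inr,
          Fin.snoc_last, Fin.snoc_castSucc, Fin.cons_succ]
        exact eq_comm
  | @func l f ts ih =>
    cases f
    have hD0 : k + tdepth (ts 0) ≤ D := by
      rw [show tdepth (Term.func jFun.j ts) = tdepth (ts 0) + 1 from rfl] at hD; omega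
    obtain ⟨hv0, hF0⟩ := ih 0 hD0
    have hreal : @Term.realize Lj M (jStruct M j) _ (Sum.elim Empty.elim v)
        (Term.func jFun.j ts) =
        j (@Term.realize Lj M (jStruct M j) _ (Sum.elim Empty.elim v) (ts 0)) := rfl
    constructor
    · rw [hreal, show k + tdepth (Term.func jFun.j ts) = (k + tdepth (ts 0)) + 1 from by
        rw [show tdepth (Term.func jFun.j ts) = tdepth (ts 0) + 1 from rfl]; omega]
      exact (hc (k + tdepth (ts 0))).2.2 _ hv0
    · intro y
      rw [hreal]
      rw [show valF (Term.func jFun.j ts)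
          = ∃' (((valF (ts 0)).liftAt 1 (m+1)) ⊓ jpairF m) from rfl]
      rw [BoundedFormula.realize_ex]
      have hstep : ∀ z : M,
          ((((valF (ts 0)).liftAt 1 (m+1)) ⊓ jpairF m).Realize Empty.elim
            (Fin.snoc (Fin.snoc (Fin.cons r v) y) z)) ↔
          (z = @Term.realize Lj M (jStruct M j) _ (Sum.elim Empty.elim v) (ts 0) ∧
            ∃ p, E p r ∧ IsPair p z y) := by
        intro z
        rw [BoundedFormula.realize_inf]
        apply and_congr
        · rw [BoundedFormula.realize_liftAt (by omega), snoc_comp_lift]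
          exact hF0 z
        · rw [realize_jpairF]
          simp [Fin.snoc_castSucc, Fin.snoc_last, Fin.cons_zero, snoc_zero']
      rw [exists_congr hstep]
      constructor
      · rintro ⟨z, rfl, p, hpr, hp⟩
        obtain ⟨x, hx, hpx⟩ := (hr p).1 hpr
        obtain ⟨h1, h2⟩ := pair_unique hp hpx
        rw [h2, h1]
      · rintro rfl
        obtain ⟨p, hp⟩ := exists_pair hM
          (@Term.realize Lj M (jStruct M j) _ (Sum.elim Empty.elim v) (ts 0))
          (j (@Term.realize Lj M (jStruct M j) _ (Sum.elim Empty.elim v) (ts 0)))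
        exact ⟨_, rfl, p, (hr p).2 ⟨_, chain_mono hc (by omega) _ hv0, hp⟩, hp⟩

end Terms

section Master
variable {M : Type} [L.Structure M]

lemma master (hM : M ⊨ ZFC) {j : M → M} :
    ∀ {m : ℕ} (φ : Lj.BoundedFormula Empty m), IsDelta0 Lj memRel.mem φ →
    ∃ (d : ℕ) (ψ : L.BoundedFormula Empty (m+1)),
      ∀ (c : ℕ → M), ChainOK j c → ∀ (D k : ℕ), k + d ≤ D → ∀ r, Codes j r (c D) →
      ∀ v : Fin m → M, (∀ i, E (v i) (c k)) →
      (@BoundedFormula.Realize Lj M (jStruct M j) Empty m φ Empty.elim v ↔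
        ψ.Realize Empty.elim (Fin.cons r v)) := by
  intro m φ h
  letI : Lj.Structure M := jStruct M j
  induction h with
  | falsum =>
    exact ⟨0, ⊥, by
      intro c hc D k hD r hr v hv
      constructor
      · intro hfalse; exact hfalse.elim
      · intro hfalse; exact (by simpa using hfalse : False).elim⟩
  | @equal m t u =>
    refine ⟨max (tdepth t) (tdepth u), ∃' (valF t ⊓ valF u), ?_⟩
    intro c hc D k hD r hr v hv
    obtain ⟨_, hFt⟩ := term_ok hM t c hc D k (by omega) r hr v hv
    obtain ⟨_, hFu⟩ := term_ok hM u c hc D k (by omega) r hr v hv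
    have hL : @BoundedFormula.Realize Lj M (jStruct M j) Empty m (t.bdEqual u) Empty.elim v ↔
        (@Term.realize Lj M (jStruct M j) _ (Sum.elim Empty.elim v) t =
         @Term.realize Lj M (jStruct M j) _ (Sum.elim Empty.elim v) u) :=
      BoundedFormula.realize_bdEqual _ _
    rw [hL, BoundedFormula.realize_ex]
    constructor
    · intro he
      exact ⟨_, BoundedFormula.realize_inf.2 ⟨(hFt _).2 rfl, (hFu _).2 he⟩⟩
    · rintro ⟨y, hy⟩
      rw [BoundedFormula.realize_inf] at hy
      exact ((hFt y).1 hy.1).symm.trans ((hFu y).1 hy.2)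
  | @rel m l R ts =>
    cases R
    refine ⟨max (tdepth (ts 0)) (tdepth (ts 1)),
      ∃' ∃' (((valF (ts 0)).liftAt 1 (m+2)) ⊓ (((valF (ts 1)).liftAt 1 (m+1)) ⊓
        mem' &((Fin.last (m+1)).castSucc) &(Fin.last (m+2)))), ?_⟩
    intro c hc D k hD r hr v hv
    obtain ⟨_, hF0⟩ := term_ok hM (ts 0) c hc D k (by omega) r hr v hv
    obtain ⟨_, hF1⟩ := term_ok hM (ts 1) c hc D k (by omega) r hr v hv
    have hvec : (fun i => @Term.realize Lj M (jStruct M j) _ (Sum.elim Empty.elim v) (ts i)) =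
        ![@Term.realize Lj M (jStruct M j) _ (Sum.elim Empty.elim v) (ts 0),
          @Term.realize Lj M (jStruct M j) _ (Sum.elim Empty.elim v) (ts 1)] := by
      funext i; fin_cases i <;> rfl
    have hL : @BoundedFormula.Realize Lj M (jStruct M j) Empty m
        (Relations.boundedFormula memRel.mem ts) Empty.elim v ↔
        E (@Term.realize Lj M (jStruct M j) _ (Sum.elim Empty.elim v) (ts 0))
          (@Term.realize Lj M (jStruct M j) _ (Sum.elim Empty.elim v) (ts 1)) := by
      rw [BoundedFormula.realize_rel, hvec]
      exact Iff.rfl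
    rw [hL, BoundedFormula.realize_ex]
    have hstep : ∀ y0 : M,
        ((∃' (((valF (ts 0)).liftAt 1 (m+2)) ⊓ (((valF (ts 1)).liftAt 1 (m+1)) ⊓
          mem' &((Fin.last (m+1)).castSucc) &(Fin.last (m+2))))).Realize Empty.elim
            (Fin.snoc (Fin.cons r v) y0)) ↔
        ∃ y1, y0 = @Term.realize Lj M (jStruct M j) _ (Sum.elim Empty.elim v) (ts 0) ∧
          (y1 = @Term.realize Lj M (jStruct M j) _ (Sum.elim Empty.elim v) (ts 1) ∧
            E y0 y1) := by
      intro y0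
      rw [BoundedFormula.realize_ex]
      apply exists_congr; intro y1
      rw [BoundedFormula.realize_inf, BoundedFormula.realize_inf]
      apply and_congr
      · rw [BoundedFormula.realize_liftAt (by omega), snoc_comp_top]
        exact hF0 y0
      · apply and_congr
        · rw [BoundedFormula.realize_liftAt (by omega), snoc_comp_lift]
          exact hF1 y1
        · rw [realize_mem']
          simp [Fin.snoc_last, Fin.snoc_castSucc]
    rw [exists_congr hstep]
    constructor
    · intro he; exact ⟨_, _, rfl, rfl, he⟩
    · rintro ⟨y0, y1, rfl, rfl, he⟩; exact he
  | @imp m φ1 φ2 h1 h2 ih1 ih2 =>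
    obtain ⟨d1, ψ1, H1⟩ := ih1
    obtain ⟨d2, ψ2, H2⟩ := ih2
    refine ⟨max d1 d2, ψ1.imp ψ2, ?_⟩
    intro c hc D k hD r hr v hv
    rw [BoundedFormula.realize_imp, BoundedFormula.realize_imp]
    exact imp_congr (H1 c hc D k (by omega) r hr v hv) (H2 c hc D k (by omega) r hr v hv)
  | @ball n t φ hφ ih =>
    obtain ⟨d, ψφ, Hφ⟩ := ih
    refine ⟨tdepth t + 1 + d,
      ∃' ((valF t) ⊓ ∀' ((mem' &(Fin.last (n+2)) &((Fin.last (n+1)).castSucc)) ⟹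
        ψφ.liftAt 1 (n+1))), ?_⟩
    intro c hc D k hD r hr v hv
    obtain ⟨htv, hFt⟩ := term_ok hM t c hc D k (by omega) r hr v hv
    have hL : ∀ y : M,
        @BoundedFormula.Realize Lj M (jStruct M j) Empty (n+1)
          (Relations.boundedFormula₂ memRel.mem (&⟨n, by omega⟩)
            (t.relabel (Sum.map id Fin.castSucc))) Empty.elim (Fin.snoc v y) ↔
          E y (@Term.realize Lj M (jStruct M j) _ (Sum.elim Empty.elim v) t) := by
      intro y
      rw [BoundedFormula.realize_rel₂]
      have e1 : @Term.realize Lj M (jStruct M j) _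
          (Sum.elim Empty.elim (Fin.snoc v y : Fin (n+1) → M)) (&⟨n, by omega⟩) = y := by
        have : (⟨n, by omega⟩ : Fin (n+1)) = Fin.last n := rfl
        simp [this, Fin.snoc_last]
      have e2 : @Term.realize Lj M (jStruct M j) _
          (Sum.elim Empty.elim (Fin.snoc v y : Fin (n+1) → M))
          (t.relabel (Sum.map id Fin.castSucc)) =
          @Term.realize Lj M (jStruct M j) _ (Sum.elim Empty.elim v) t := by
        rw [Term.realize_relabel]
        congr 1
        funext s
        rcases s with e | i
        · exact e.elim
        · simp [Fin.snoc_castSucc]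
      rw [e1, e2]
      exact Iff.rfl
    rw [BoundedFormula.realize_all, BoundedFormula.realize_ex]
    have hstep : ∀ w : M,
        (((valF t) ⊓ ∀' ((mem' &(Fin.last (n+2)) &((Fin.last (n+1)).castSucc)) ⟹
          ψφ.liftAt 1 (n+1))).Realize Empty.elim (Fin.snoc (Fin.cons r v) w)) ↔
        (w = @Term.realize Lj M (jStruct M j) _ (Sum.elim Empty.elim v) t ∧
          ∀ y, E y w → ψφ.Realize Empty.elim (Fin.snoc (Fin.cons r v) y)) := by
      intro w
      rw [BoundedFormula.realize_inf]
      apply and_congr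
      · exact hFt w
      · rw [BoundedFormula.realize_all]
        apply forall_congr'; intro y
        rw [BoundedFormula.realize_imp]
        apply imp_congr
        · rw [realize_mem']
          simp [Fin.snoc_last, Fin.snoc_castSucc]
        · rw [BoundedFormula.realize_liftAt (by omega), snoc_comp_lift]
    rw [exists_congr hstep]
    have hIH : ∀ y, E y (@Term.realize Lj M (jStruct M j) _ (Sum.elim Empty.elim v) t) →
        (@BoundedFormula.Realize Lj M (jStruct M j) Empty (n+1) φ Empty.elim (Fin.snoc v y) ↔
          ψφ.Realize Empty.elim (Fin.snoc (Fin.cons r v) y)) := by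
      intro y hy
      have hv' : ∀ i : Fin (n+1), E ((Fin.snoc v y : Fin (n+1) → M) i) (c (k + tdepth t + 1)) := by
        intro i
        induction i using Fin.lastCases with
        | last =>
          rw [Fin.snoc_last]
          exact (hc (k + tdepth t)).2.1 _ y htv hy
        | cast i' =>
          rw [Fin.snoc_castSucc]
          exact chain_mono hc (by omega) _ (hv i')
      have := Hφ c hc D (k + tdepth t + 1) (by omega) r hr (Fin.snoc v y) hv'
      rwa [cons_snoc] at this
    constructor
    · intro hall
      exact ⟨_, rfl, fun y hy => (hIH y hy).1 (hall y ((hL y).2 hy))⟩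
    · rintro ⟨w, rfl, hall⟩ y hy
      exact (hIH y ((hL y).1 hy)).2 (hall y ((hL y).1 hy))
end Master

/-- Amenability implies Σ₀-Separation in the expanded language `{∈, j}`:
for each Δ₀ formula `φ` of `{∈, j}`, parameters and a set `a`, the class
`{x ∈ a : φ(x, b⃗)}` is a set of the model. -/
theorem amenable_implies_delta0_separation {M : Type} [L.Structure M] (hM : M ⊨ ZFC)
    (j : M → M) (hj : IsElem j) (hamen : Amenable j) :
    ∀ (n : ℕ) (φ : Lj.BoundedFormula Empty (n + 1)), IsDelta0 Lj memRel.mem φ →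
      ∀ (v : Fin n → M) (a : M), ∃ b : M, ∀ x : M,
        E x b ↔ (E x a ∧
          @BoundedFormula.Realize Lj M (jStruct M j) Empty (n + 1) φ
            Empty.elim (Fin.snoc v x)) := by
  intro n φ hφ v a
  obtain ⟨d, ψ, hmaster⟩ := master hM (j := j) φ hφ
  obtain ⟨c0, hc0a, hc0v⟩ := exists_c0 hM n v a
  obtain ⟨c, hc0eq, hcOK⟩ := exists_chain hM hamen c0
  obtain ⟨r, hr⟩ := hamen (c d)
  have hcode : Codes j r (c d) := hr
  obtain ⟨b, hb⟩ := hsepL hM ψ (Fin.cons r v) a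
  refine ⟨b, fun x => ?_⟩
  rw [hb x]
  have key : ∀ x : M, E x a →
      (@BoundedFormula.Realize Lj M (jStruct M j) Empty (n + 1) φ Empty.elim (Fin.snoc v x) ↔
        ψ.Realize Empty.elim (Fin.snoc (Fin.cons r v) x)) := by
    intro x hxa
    have hv' : ∀ i : Fin (n+1), E ((Fin.snoc v x : Fin (n+1) → M) i) (c 0) := by
      intro i
      induction i using Fin.lastCases with
      | last => rw [Fin.snoc_last, hc0eq]; exact hc0a x hxa
      | cast i' => rw [Fin.snoc_castSucc, hc0eq]; exact hc0v i'
    have := hmaster c hcOK d 0 (by omega) r hcode (Fin.snoc v x) hv'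
    rwa [cons_snoc] at this
  constructor
  · rintro ⟨hxa, h⟩
    exact ⟨hxa, (key x hxa).2 h⟩
  · rintro ⟨hxa, h⟩
    exact ⟨hxa, (key x hxa).1 h⟩
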